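/- Let N, B ∈ ℤ>0. For every function T : [N] → 2^{[B]}, there exists an unweighted SLG of size at most 4NB producing a binary string V of length B^N such that, for every function S : [N] → [B], one has V[∑_{i∈[N]} S(i)·B^i] = 1 if and only if there exists i ∈ [N] with S(i) ∈ T(i). -/

import Mathlib

open scoped BigOperators

/-- Symbols of a grammar with `nv` variables and terminal alphabet `α`:
variables are `Sum.inl`, terminals are `Sum.inr`. -/
abbrev GSym (nv : ℕ) (α : Type) : Type := Sum (Fin nv) α

open Classical in
/-- The number of runs (maximal blocks of equal consecutive entries) of a list,
i.e. the length `|rle(X)|` of its run-length encoding. -/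
noncomputable def numRuns {β : Type} : List β → ℕ
  | [] => 0
  | [_] => 1
  | a :: b :: l => (if a = b then 0 else 1) + numRuns (b :: l)

/-- A weighted straight-line grammar (SLG) with variables `Fin nv` and terminal
alphabet `α`.  The same structure is used for run-length straight-line grammars
(RLSLGs), which differ from SLGs only in how their size is measured
(`sizeRLE` instead of `size`).  The field `rank` witnesses the existence of a
strict linear order `≺` on the variables with `B ≺ A` whenever `B` occurs in
`rhs A`. -/
structure WSLG (nv : ℕ) (α : Type) where
  rhs : Fin nv → List (GSym nv α)
  start : GSym nv α
  wt : α → ℕ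
  wt_pos : ∀ a, 1 ≤ wt a
  rank : Fin nv → ℕ
  rank_lt : ∀ A B, Sum.inl B ∈ rhs A → rank B < rank A

namespace WSLG

variable {nv nv' : ℕ} {α : Type}

/-- Fuel-based expansion; the fuel is always sufficient thanks to `rank_lt`. -/
def expandFuel (G : WSLG nv α) : ℕ → GSym nv α → List α
  | _, Sum.inr a => [a]
  | 0, Sum.inl _ => []
  | n + 1, Sum.inl A => ((G.rhs A).map (G.expandFuel n)).flatten

/-- The expansion `exp(s)` of a symbol `s`. -/
def exp (G : WSLG nv α) : GSym nv α → List α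
  | Sum.inr a => [a]
  | Sum.inl A => G.expandFuel (G.rank A + 1) (Sum.inl A)

/-- The expansion of a sequence of symbols. -/
def expSeq (G : WSLG nv α) (xs : List (GSym nv α)) : List α :=
  (xs.map G.exp).flatten

/-- The weight `⟨s⟩` of a symbol: total weight of the characters of its expansion. -/
def wtSym (G : WSLG nv α) (s : GSym nv α) : ℕ :=
  ((G.exp s).map G.wt).sum

/-- The weight of a sequence of symbols. -/
def wtSeq (G : WSLG nv α) (xs : List (GSym nv α)) : ℕ :=
  ((G.expSeq xs).map G.wt).sum

/-- The size `|G|` of an SLG: total length of all right-hand sides. -/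
def size (G : WSLG nv α) : ℕ := ∑ A, (G.rhs A).length

/-- The size `|G|` of an RLSLG: total run-length-encoded size of all
right-hand sides. -/
noncomputable def sizeRLE (G : WSLG nv α) : ℕ := ∑ A, numRuns (G.rhs A)

/-- A grammar is unweighted if every terminal has weight 1. -/
def Unweighted (G : WSLG nv α) : Prop := ∀ a, G.wt a = 1

/-- `f` is a grammar homomorphism from `G` to `H`:
`exp_G(A) = exp_H(f A)` for every variable `A` of `G`. -/
def IsHom (G : WSLG nv α) (H : WSLG nv' α) (f : Fin nv → Fin nv') : Prop :=
  ∀ A, G.exp (Sum.inl A) = H.exp (Sum.inl (f A))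

/-- Normal form for RLSLGs: every right-hand side is either a pair of exactly
two symbols or a power `s^k` of a single symbol with `k > 2`. -/
def NormalForm (G : WSLG nv α) : Prop :=
  ∀ A, (∃ s t : GSym nv α, G.rhs A = [s, t]) ∨
       (∃ (s : GSym nv α) (k : ℕ), 2 < k ∧ G.rhs A = List.replicate k s)

/-- A grammar is contracting if no variable has a heavy variable child, i.e.
every variable child `B` of `A` satisfies `⟨B⟩ ≤ ⟨A⟩/2`. -/
def Contracting (G : WSLG nv α) : Prop :=
  ∀ A : Fin nv, ∀ B : Fin nv, Sum.inl B ∈ G.rhs A →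
    2 * G.wtSym (Sum.inl B) ≤ G.wtSym (Sum.inl A)

/-- A variable `A` is `τ`-nice (w.r.t. the constant `d`):
(1) every variable child `B` satisfies `⟨B⟩ ≤ ⟨A⟩/τ`;
(2) `|rle(rhs A)| ≤ 2dτ`;
(3) every contiguous substring `X` of `rhs A` with `⟨X⟩ ≤ ⟨A⟩/τ` satisfies
`|rle(X)| ≤ 2d⌈log₂ τ⌉`. -/
def NiceVar (G : WSLG nv α) (d : ℕ) (τ : ℝ) (A : Fin nv) : Prop :=
  (∀ B : Fin nv, Sum.inl B ∈ G.rhs A →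
      (G.wtSym (Sum.inl B) : ℝ) ≤ (G.wtSym (Sum.inl A) : ℝ) / τ) ∧
  ((numRuns (G.rhs A) : ℝ) ≤ 2 * d * τ) ∧
  (∀ X : List (GSym nv α), X <:+: G.rhs A →
      (G.wtSeq X : ℝ) ≤ (G.wtSym (Sum.inl A) : ℝ) / τ →
      (numRuns X : ℝ) ≤ 2 * d * (⌈Real.logb 2 τ⌉ : ℝ))

/-- A grammar is `(τr, τv)`-nice (w.r.t. `d`) if its start symbol is `τr`-nice
and all its other variables are `τv`-nice. -/
def Nice (G : WSLG nv α) (d : ℕ) (τr τv : ℝ) : Prop :=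
  (∀ A : Fin nv, Sum.inl A = G.start → G.NiceVar d τr A) ∧
  (∀ A : Fin nv, Sum.inl A ≠ G.start → G.NiceVar d τv A)

/-- Parent–child step in the parse tree: from the node `(A, a)` to its `i`-th
child `(B_i, a + ⟨B_0 ⋯ B_{i-1}⟩)` where `rhs A = B_0 ⋯ B_{k-1}`. -/
def PTStep (G : WSLG nv α) (p q : GSym nv α × ℕ) : Prop :=
  ∃ (A : Fin nv) (i : ℕ) (h : i < (G.rhs A).length),
    p.1 = Sum.inl A ∧
    q = ((G.rhs A).get ⟨i, h⟩, p.2 + G.wtSeq ((G.rhs A).take i))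

/-- `PTNode G ℓ v` states that `v` is a node of the parse tree `P_G` whose
path from the root `(start, 0)` has `ℓ` edges. -/
inductive PTNode (G : WSLG nv α) : ℕ → GSym nv α × ℕ → Prop
  | root : PTNode G 0 (G.start, 0)
  | step {n : ℕ} {p q : GSym nv α × ℕ} :
      PTNode G n p → PTStep G p q → PTNode G (n + 1) q

/-- Fuel-based height; the fuel is always sufficient thanks to `rank_lt`. -/
def heightFuel (G : WSLG nv α) : ℕ → GSym nv α → ℕ
  | _, Sum.inr _ => 0
  | 0, Sum.inl _ => 0
  | n + 1, Sum.inl A => 1 + ((G.rhs A).map (G.heightFuel n)).foldr max 0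

/-- The height of a symbol: `h(a) = 0` for terminals and
`h(A) = 1 + max_i h(B_i)` for a variable with `rhs A = B_0 ⋯ B_{k-1}`. -/
def heightSym (G : WSLG nv α) : GSym nv α → ℕ
  | Sum.inr _ => 0
  | Sum.inl A => G.heightFuel (G.rank A + 1) (Sum.inl A)

/-- A leaf variable (for parameter `b`): its right-hand side consists of
terminals only and has length in `[b .. 2b)`. -/
def IsLeafVar (G : WSLG nv α) (b : ℕ) (A : Fin nv) : Prop :=
  (∀ s ∈ G.rhs A, ∃ a : α, s = Sum.inr a) ∧
  b ≤ (G.rhs A).length ∧ (G.rhs A).length < 2 * b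

/-- A top variable: its right-hand side contains only variables. -/
def IsTopVar (G : WSLG nv α) (A : Fin nv) : Prop :=
  ∀ s ∈ G.rhs A, ∃ B : Fin nv, s = Sum.inl B

/-- A grammar is `b`-leafy if every variable is a leaf variable or a top
variable. -/
def BLeafy (G : WSLG nv α) (b : ℕ) : Prop :=
  ∀ A, G.IsLeafVar b A ∨ G.IsTopVar A

open Classical in
/-- The size `|Top(G)|` of the top part of a (b-leafy) RLSLG: total
run-length-encoded size of the right-hand sides of the top variables. -/
noncomputable def topSizeRLE (G : WSLG nv α) : ℕ :=
  ∑ A, if G.IsTopVar A then numRuns (G.rhs A) else 0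

open Classical in
/-- The number of leaf variables of a (b-leafy) grammar. -/
noncomputable def numLeafVars (G : WSLG nv α) (b : ℕ) : ℕ :=
  (Finset.univ.filter fun A => G.IsLeafVar b A).card

/-- For an unweighted `b`-leafy grammar `G`, the variable `A` (a top variable)
is `τ`-nice as a variable of the top part `Top(G)`: in `Top(G)`, the variables
are the top variables of `G`, the terminals are the leaf variables of `G`, and
the weight of a symbol is the length of its `G`-expansion. -/
def NiceTopVar (G : WSLG nv α) (d : ℕ) (τ : ℝ) (A : Fin nv) : Prop :=
  (∀ B : Fin nv, Sum.inl B ∈ G.rhs A → G.IsTopVar B →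
      ((G.exp (Sum.inl B)).length : ℝ) ≤ ((G.exp (Sum.inl A)).length : ℝ) / τ) ∧
  ((numRuns (G.rhs A) : ℝ) ≤ 2 * d * τ) ∧
  (∀ X : List (GSym nv α), X <:+: G.rhs A →
      ((G.expSeq X).length : ℝ) ≤ ((G.exp (Sum.inl A)).length : ℝ) / τ →
      (numRuns X : ℝ) ≤ 2 * d * (⌈Real.logb 2 τ⌉ : ℝ))

/-- The top part `Top(G)` of an unweighted `b`-leafy grammar `G` is
`(τr, τv)`-nice (w.r.t. `d`): the start symbol, if it is a top variable, is
`τr`-nice in `Top(G)`, and all other top variables are `τv`-nice in `Top(G)`. -/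
def TopNice (G : WSLG nv α) (d : ℕ) (τr τv : ℝ) : Prop :=
  (∀ A : Fin nv, G.IsTopVar A → Sum.inl A = G.start → G.NiceTopVar d τr A) ∧
  (∀ A : Fin nv, G.IsTopVar A → Sum.inl A ≠ G.start → G.NiceTopVar d τv A)

end WSLG

/-- A data-structure problem `f : X × Y → Z` has `(M, w, t)`-certificates. -/
def HasCertificates {X Y Z : Type*} (f : X → Y → Z) (M w t : ℕ) : Prop :=
  ∃ D : Y → Fin M → (Fin w → Bool),
    ∀ x y, ∃ C : Finset (Fin M), C.card = t ∧
      ∀ y', (∀ i ∈ C, D y i = D y' i) → f x y' = f x y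

/-- An input of the SLG Random Access problem with parameters `(n, g, σ)`:
an unweighted SLG of size at most `g` producing a string `T ∈ [0..σ)^n`. -/
structure RAInput (n g σ : ℕ) where
  nv : ℕ
  G : WSLG nv (Fin σ)
  unweighted : G.Unweighted
  size_le : G.size ≤ g
  len_eq : (G.exp G.start).length = n

/-- The SLG Random Access problem: given a position `i ∈ [0..n)` and an input
producing `T`, return `T[i]`. -/
def RAProblem (n g σ : ℕ) (x : Fin n) (y : RAInput n g σ) : Fin σ :=
  (y.G.exp y.G.start).get (Fin.cast y.len_eq.symm x)

/-- The Blocked Lopsided Set Disjointness (BLSD) problem with parameters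
`N, B`: queries are `S : [N] → [B]`, inputs are `T : [N] → 2^[B]`, and the
answer is whether there exists `i` with `S i ∈ T i`. -/
def BLSDProblem (N B : ℕ) (S : Fin N → Fin B) (T : Fin N → Finset (Fin B)) : Prop :=
  ∃ i, S i ∈ T i

namespace WSLG

variable {nv : ℕ} {α : Type}

lemma expandFuel_inr (G : WSLG nv α) (n : ℕ) (a : α) :
    G.expandFuel n (Sum.inr a) = [a] := by cases n <;> rfl

lemma expandFuel_congr (G : WSLG nv α) :
    ∀ n m s, (∀ A, s = Sum.inl A → G.rank A < n ∧ G.rank A < m) →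
    G.expandFuel n s = G.expandFuel m s := by
  intro n
  induction n with
  | zero =>
    intro m s h
    cases s with
    | inr a => cases m <;> rfl
    | inl A => exact absurd (h A rfl).1 (Nat.not_lt_zero _)
  | succ n ih =>
    intro m s h
    cases s with
    | inr a => cases m <;> rfl
    | inl A =>
      obtain ⟨h1, h2⟩ := h A rfl
      obtain ⟨m, rfl⟩ : ∃ m', m = m' + 1 := ⟨m - 1, by omega⟩
      show ((G.rhs A).map (G.expandFuel n)).flatten = ((G.rhs A).map (G.expandFuel m)).flatten
      congr 1
      apply List.map_congr_left
      intro s hs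
      apply ih
      intro C hC
      subst hC
      have := G.rank_lt A C hs
      exact ⟨lt_of_lt_of_le this (Nat.lt_succ_iff.mp h1),
        lt_of_lt_of_le this (Nat.lt_succ_iff.mp h2)⟩

lemma exp_inl (G : WSLG nv α) (A : Fin nv) :
    G.exp (Sum.inl A) = G.expSeq (G.rhs A) := by
  show G.expandFuel (G.rank A + 1) (Sum.inl A) = _
  show ((G.rhs A).map (G.expandFuel (G.rank A))).flatten = ((G.rhs A).map G.exp).flatten
  congr 1
  apply List.map_congr_left
  intro s hs
  cases s with
  | inr a => rw [G.expandFuel_inr]; rfl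
  | inl B =>
    have hB := G.rank_lt A B hs
    show _ = G.expandFuel (G.rank B + 1) (Sum.inl B)
    exact G.expandFuel_congr _ _ _ (by rintro C hC; injection hC with hC; subst hC; omega)

end WSLG

/-- getD of a flatten of equal-length blocks. -/
lemma flatten_getD {β : Type*} (d : β) (L : ℕ) (hL : 0 < L) :
    ∀ (bs : List (List β)), (∀ b ∈ bs, b.length = L) →
    ∀ j r : ℕ, j < bs.length → r < L →
    bs.flatten.getD (j * L + r) d = (bs.getD j []).getD r d := by
  intro bs
  induction bs with
  | nil => intro _ j r hj _; exact absurd hj (by simp)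
  | cons b bs ih =>
    intro hlen j r hj hr
    have hb : b.length = L := hlen b (by simp)
    cases j with
    | zero =>
      rw [List.flatten_cons, Nat.zero_mul, Nat.zero_add,
        List.getD_append _ _ _ _ (by rw [hb]; exact hr), List.getD_cons_zero]
    | succ j =>
      rw [List.flatten_cons, List.getD_append_right _ _ _ _ (by rw [hb, Nat.succ_mul]; omega)]
      have hidx : (j + 1) * L + r - b.length = j * L + r := by rw [hb, Nat.succ_mul]; omega
      rw [hidx, List.getD_cons_succ]
      exact ih (fun x hx => hlen x (by simp [hx])) j r (by simpa using hj) hr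

/-- The target string of the BLSD encoding: `Wstr B t k` has length `B^k` and
its character at position `∑_{i<k} S(i)·B^i` is 1 iff `∃ i < k, t i (S i)`. -/
def Wstr (B : ℕ) (t : ℕ → ℕ → Bool) : ℕ → List (Fin 2)
  | 0 => [0]
  | k + 1 => ((List.range B).map (fun j =>
      if t k j then List.replicate (B ^ k) (1 : Fin 2) else Wstr B t k)).flatten

lemma Wstr_length (B : ℕ) (t : ℕ → ℕ → Bool) : ∀ k, (Wstr B t k).length = B ^ k := by
  intro k
  induction k with
  | zero => rfl
  | succ k ih =>
    show (((List.range B).map _).flatten).length = _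
    rw [List.length_flatten, List.map_map]
    rw [List.sum_eq_card_nsmul _ (B ^ k) ?hconst, List.length_map, List.length_range,
      smul_eq_mul, pow_succ, Nat.mul_comm]
    case hconst =>
    intro x hx
    simp only [List.mem_map, Function.comp] at hx
    obtain ⟨j, _, rfl⟩ := hx
    by_cases h : t k j <;> simp [h, ih]

lemma digit_sum_lt (B : ℕ) (hB : 0 < B) (S : ℕ → ℕ) :
    ∀ k, (∀ i, i < k → S i < B) → (∑ i ∈ Finset.range k, S i * B ^ i) < B ^ k := by
  intro k
  induction k with
  | zero => simp
  | succ k ih =>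
    intro hS
    rw [Finset.sum_range_succ]
    have h1 : (∑ i ∈ Finset.range k, S i * B ^ i) < B ^ k := ih (fun i hi => hS i (by omega))
    have h2 : S k * B ^ k ≤ (B - 1) * B ^ k :=
      Nat.mul_le_mul_right _ (by have := hS k (by omega); omega)
    have h3 : (B - 1) * B ^ k + B ^ k = B ^ (k + 1) := by
      have h4 : (B - 1) * B ^ k + B ^ k = (B - 1 + 1) * B ^ k := by ring
      rw [h4, Nat.sub_add_cancel hB, pow_succ, Nat.mul_comm]
    omega

lemma Wstr_getD (B : ℕ) (hB : 0 < B) (t : ℕ → ℕ → Bool) (S : ℕ → ℕ) :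
    ∀ k, (∀ i, i < k → S i < B) →
    ((Wstr B t k).getD (∑ i ∈ Finset.range k, S i * B ^ i) 0 = 1 ↔
      ∃ i, i < k ∧ t i (S i)) := by
  intro k
  induction k with
  | zero =>
    intro _
    simp only [Finset.range_zero, Finset.sum_empty]
    show (0 : Fin 2) = 1 ↔ _
    constructor
    · intro h; exact absurd h (by decide)
    · rintro ⟨i, hi, _⟩; omega
  | succ k ih =>
    intro hS
    have hr : (∑ i ∈ Finset.range k, S i * B ^ i) < B ^ k :=
      digit_sum_lt B hB S k (fun i hi => hS i (by omega))
    set r := (∑ i ∈ Finset.range k, S i * B ^ i) with hrdef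
    have hlen : ∀ b ∈ (List.range B).map (fun j =>
        if t k j then List.replicate (B ^ k) (1 : Fin 2) else Wstr B t k), b.length = B ^ k := by
      intro b hb
      simp only [List.mem_map] at hb
      obtain ⟨j, _, rfl⟩ := hb
      by_cases h : t k j <;> simp [h, Wstr_length]
    have key := flatten_getD (0 : Fin 2) (B ^ k) (Nat.pow_pos hB) _ hlen (S k) r
      (by simpa using hS k (by omega)) hr
    have hidx : (∑ i ∈ Finset.range (k + 1), S i * B ^ i) = S k * B ^ k + r := by
      rw [Finset.sum_range_succ, hrdef]; ring
    rw [hidx]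
    show ((((List.range B).map _).flatten).getD _ 0 = 1 ↔ _)
    rw [key]
    have hSk : S k < B := hS k (by omega)
    set f : ℕ → List (Fin 2) :=
      (fun j => if t k j then List.replicate (B ^ k) (1 : Fin 2) else Wstr B t k) with hf
    have hblock : ((List.range B).map f).getD (S k) [] = f (S k) := by
      rw [List.getD_eq_getElem _ _ (by simpa using hSk)]
      simp
    rw [hblock]
    by_cases h : t k (S k)
    · have hfv : f (S k) = List.replicate (B ^ k) (1 : Fin 2) := by rw [hf]; simp [h]
      rw [hfv, List.getD_eq_getElem _ _ (by simpa using hr), List.getElem_replicate]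
      exact ⟨fun _ => ⟨k, by omega, h⟩, fun _ => rfl⟩
    · have hfv : f (S k) = Wstr B t k := by rw [hf]; simp [h]
      rw [hfv, ih (fun i hi => hS i (by omega))]
      constructor
      · rintro ⟨i, hi, hti⟩; exact ⟨i, by omega, hti⟩
      · rintro ⟨i, hi, hti⟩
        refine ⟨i, ?_, hti⟩
        rcases Nat.lt_succ_iff_lt_or_eq.mp hi with h' | rfl
        · exact h'
        · exact absurd hti (by simpa using h)

lemma flatten_replicate_replicate {β : Type*} (n m : ℕ) (a : β) :
    (List.replicate n (List.replicate m a)).flatten = List.replicate (n * m) a := by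
  induction n with
  | zero => simp
  | succ n ih =>
    rw [List.replicate_succ, List.flatten_cons, ih, Nat.succ_mul, Nat.add_comm,
      List.replicate_add]

section BLSDGrammar

variable (N B : ℕ) (t : ℕ → ℕ → Bool)

/-- Right-hand sides of the BLSD-encoding grammar.  Variable `k < N` expands to
`Wstr B t (k+1)`; variable `N + k` expands to the all-ones string of length
`B^(k+1)`. -/
def blsdRhs (A : Fin (2 * N)) : List (GSym (2 * N) (Fin 2)) :=
  if hA : (A : ℕ) < N then
    (List.range B).map (fun j =>
      if t A.val j then
        (if A.val = 0 then Sum.inr 1 else Sum.inl ⟨N + (A.val - 1), by omega⟩)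
      else
        (if A.val = 0 then Sum.inr 0 else Sum.inl ⟨A.val - 1, by omega⟩))
  else
    if (A : ℕ) = N then List.replicate B (Sum.inr 1)
    else List.replicate B (Sum.inl ⟨A.val - 1, by have := A.isLt; omega⟩)

/-- The BLSD-encoding grammar. -/
def blsdG (hN : 0 < N) : WSLG (2 * N) (Fin 2) where
  rhs := blsdRhs N B t
  start := Sum.inl ⟨N - 1, by omega⟩
  wt := fun _ => 1
  wt_pos := fun _ => le_refl 1
  rank := fun A => if (A : ℕ) < N then A.val else A.val - N
  rank_lt := by
    intro A C hC
    simp only [blsdRhs] at hC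
    have hA := A.isLt
    show (if (C : ℕ) < N then (C : ℕ) else (C : ℕ) - N) <
      (if (A : ℕ) < N then (A : ℕ) else (A : ℕ) - N)
    by_cases h1 : (A : ℕ) < N
    · rw [dif_pos h1] at hC
      rw [List.mem_map] at hC
      obtain ⟨j, -, hEq⟩ := hC
      have hval : (A : ℕ) ≠ 0 ∧
          ((C : ℕ) = N + ((A : ℕ) - 1) ∨ (C : ℕ) = (A : ℕ) - 1) := by
        by_cases h0 : (A : ℕ) = 0
        · rw [if_pos h0, if_pos h0] at hEq
          split_ifs at hEq <;> exact absurd hEq (by simp)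
        · rw [if_neg h0, if_neg h0] at hEq
          split_ifs at hEq <;>
          · injection hEq with hEq
            refine ⟨h0, ?_⟩
            rw [← hEq]
            simp
      obtain ⟨h0, hv | hv⟩ := hval <;> rw [hv] <;> split_ifs <;> omega
    · rw [dif_neg h1] at hC
      by_cases h2 : (A : ℕ) = N
      · rw [if_pos h2] at hC
        rw [List.mem_replicate] at hC
        exact absurd hC.2 (by simp)
      · rw [if_neg h2] at hC
        rw [List.mem_replicate] at hC
        obtain ⟨-, hEq⟩ := hC
        injection hEq with hEq
        have hv : (C : ℕ) = (A : ℕ) - 1 := by rw [hEq]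
        rw [hv]
        split_ifs <;> omega

lemma blsdRhs_length (A : Fin (2 * N)) : (blsdRhs N B t A).length = B := by
  simp only [blsdRhs]
  split_ifs <;> simp

lemma blsdG_size (hN : 0 < N) : (blsdG N B t hN).size = 2 * N * B := by
  simp only [WSLG.size, blsdG, blsdRhs_length, Finset.sum_const, Finset.card_univ,
    Fintype.card_fin, smul_eq_mul]

lemma Wstr_succ (k : ℕ) : Wstr B t (k + 1) =
    ((List.range B).map (fun j =>
      if t k j then List.replicate (B ^ k) (1 : Fin 2) else Wstr B t k)).flatten := rfl

lemma blsdG_expO (hN : 0 < N) :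
    ∀ k (h : N + k < 2 * N), (blsdG N B t hN).exp (Sum.inl ⟨N + k, h⟩) =
      List.replicate (B ^ (k + 1)) (1 : Fin 2) := by
  intro k
  induction k with
  | zero =>
    intro h
    rw [WSLG.exp_inl]
    show (blsdG N B t hN).expSeq (blsdRhs N B t ⟨N + 0, h⟩) = _
    have hrhs : blsdRhs N B t ⟨N + 0, h⟩ = List.replicate B (Sum.inr 1) := by
      simp only [blsdRhs]
      rw [dif_neg (by simp), if_pos (by simp)]
    rw [hrhs, WSLG.expSeq, List.map_replicate]
    show (List.replicate B [(1 : Fin 2)]).flatten = _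
    rw [show ([(1 : Fin 2)]) = List.replicate 1 1 from rfl, flatten_replicate_replicate]
    simp
  | succ k ih =>
    intro h
    rw [WSLG.exp_inl]
    show (blsdG N B t hN).expSeq (blsdRhs N B t ⟨N + (k + 1), h⟩) = _
    have hrhs : blsdRhs N B t ⟨N + (k + 1), h⟩ =
        List.replicate B (Sum.inl ⟨N + k, by omega⟩) := by
      simp only [blsdRhs]
      rw [dif_neg (by omega), if_neg (by omega)]
      congr 1
    rw [hrhs, WSLG.expSeq, List.map_replicate, ih (by omega), flatten_replicate_replicate]
    congr 1
    rw [pow_succ B (k + 1), Nat.mul_comm]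

lemma blsdG_expA (hN : 0 < N) :
    ∀ k (h : k < 2 * N), k < N →
      (blsdG N B t hN).exp (Sum.inl ⟨k, h⟩) = Wstr B t (k + 1) := by
  intro k
  induction k with
  | zero =>
    intro h _
    rw [WSLG.exp_inl]
    show (blsdG N B t hN).expSeq (blsdRhs N B t ⟨0, h⟩) = _
    have hrhs : blsdRhs N B t ⟨0, h⟩ =
        (List.range B).map (fun j => if t 0 j then Sum.inr 1 else Sum.inr 0) := by
      simp only [blsdRhs]
      rw [dif_pos (by omega)]
      simp
    rw [hrhs, WSLG.expSeq, List.map_map, Wstr_succ]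
    congr 1
    apply List.map_congr_left
    intro j _
    by_cases ht : t 0 j <;> simp [ht, Function.comp, WSLG.exp, Wstr]
  | succ k ih =>
    intro h hk
    rw [WSLG.exp_inl]
    show (blsdG N B t hN).expSeq (blsdRhs N B t ⟨k + 1, h⟩) = _
    have hrhs : blsdRhs N B t ⟨k + 1, h⟩ =
        (List.range B).map (fun j => if t (k + 1) j then
          Sum.inl ⟨N + k, by omega⟩ else Sum.inl ⟨k, by omega⟩) := by
      simp only [blsdRhs]
      rw [dif_pos (by omega)]
      apply List.map_congr_left
      intro j _
      by_cases ht : t (k + 1) j <;> simp [ht]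
    rw [hrhs, WSLG.expSeq, List.map_map, Wstr_succ]
    congr 1
    apply List.map_congr_left
    intro j _
    by_cases ht : t (k + 1) j
    · simp only [Function.comp, ht, if_true]
      exact blsdG_expO N B t hN k (by omega)
    · simp only [Function.comp, ht, if_false]
      exact ih (by omega) (by omega)

end BLSDGrammar

/-- For every function `T : [N] → 2^[B]` there exists an
unweighted SLG of size at most `4NB` producing a binary string `V` of length
`B^N` such that, for every `S : [N] → [B]`,
`V[∑_i S(i)·B^i] = 1` iff `∃ i, S(i) ∈ T(i)`. -/
theorem vy_blsd_encoding (N B : ℕ) (hN : 0 < N) (hB : 0 < B)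
    (T : Fin N → Finset (Fin B)) :
    ∃ (nv : ℕ) (G : WSLG nv (Fin 2)),
      G.Unweighted ∧ G.size ≤ 4 * N * B ∧
      (G.exp G.start).length = B ^ N ∧
      ∀ S : Fin N → Fin B,
        ((G.exp G.start).getD (∑ i : Fin N, (S i : ℕ) * B ^ (i : ℕ)) 0 = 1 ↔
          ∃ i : Fin N, S i ∈ T i) := by
  classical
  set t : ℕ → ℕ → Bool := fun k j =>
    if hk : k < N then
      (if hj : j < B then decide ((⟨j, hj⟩ : Fin B) ∈ T ⟨k, hk⟩) else false)
    else false with htdef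
  refine ⟨2 * N, blsdG N B t hN, fun _ => rfl, ?_, ?_, ?_⟩
  · rw [blsdG_size]
    have : 2 * N * B ≤ 4 * N * B := Nat.mul_le_mul_right B (by omega)
    exact this
  · have hstart : (blsdG N B t hN).start = Sum.inl ⟨N - 1, by omega⟩ := rfl
    rw [hstart, blsdG_expA N B t hN (N - 1) (by omega) (by omega), Wstr_length]
    congr 1
    omega
  · intro S
    set S' : ℕ → ℕ := fun i => if h : i < N then (S ⟨i, h⟩ : ℕ) else 0 with hS'
    have hS'v : ∀ i (hi : i < N), S' i = (S ⟨i, hi⟩ : ℕ) := fun i hi => dif_pos hi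
    have hS'lt : ∀ i, i < N → S' i < B := by
      intro i hi
      rw [hS'v i hi]
      exact (S ⟨i, hi⟩).isLt
    have hsum : (∑ i : Fin N, (S i : ℕ) * B ^ (i : ℕ)) =
        ∑ i ∈ Finset.range N, S' i * B ^ i := by
      rw [← Fin.sum_univ_eq_sum_range (fun i => S' i * B ^ i) N]
      apply Finset.sum_congr rfl
      intro i _
      congr 1
      rw [hS'v i.val i.isLt]
    have hexp : (blsdG N B t hN).exp (blsdG N B t hN).start = Wstr B t N := by
      have hstart : (blsdG N B t hN).start = Sum.inl ⟨N - 1, by omega⟩ := rfl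
      rw [hstart, blsdG_expA N B t hN (N - 1) (by omega) (by omega)]
      congr 1
      omega
    have ht_iff : ∀ i (hi : i < N), (t i (S' i) = true ↔ S ⟨i, hi⟩ ∈ T ⟨i, hi⟩) := by
      intro i hi
      rw [htdef]
      simp only [hS'v i hi]
      rw [dif_pos hi, dif_pos (S ⟨i, hi⟩).isLt, decide_eq_true_eq, Fin.eta]
    rw [hexp, hsum, Wstr_getD B hB t S' N hS'lt]
    constructor
    · rintro ⟨i, hi, hti⟩
      exact ⟨⟨i, hi⟩, (ht_iff i hi).mp hti⟩
    · rintro ⟨i, hmem⟩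
      exact ⟨i.val, i.isLt, (ht_iff i.val i.isLt).mpr (by simpa using hmem)⟩
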